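/- For every position i ≥ 1 of the Fibonacci word F there exists m₀ such that for all m ≥ m₀ the factor F[i; 2f_m] is a square (i.e., F[i; f_m] = F[i+f_m; f_m]). In particular, every position of F starts infinitely many distinct squares. -/
import Mathlib


/-- Fibonacci numbers: `fn 0 = 1`, `fn 1 = 2`, `fn (m+2) = fn (m+1) + fn m`
(so `fn m` is the paper's `f_m`; also `f_{m-1} = Nat.fib (m+1)` etc.). -/
def fn (m : ℕ) : ℕ := Nat.fib (m + 2)

/-- Finite Fibonacci words `Fw m = σ^m(a)` for the morphism σ(a)=ab, σ(b)=a,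
with `a := false`, `b := true`; equivalently `Fw (m+2) = Fw (m+1) ++ Fw m`. -/
def Fw : ℕ → List Bool
  | 0 => [false]
  | 1 => [false, true]
  | m + 2 => Fw (m + 1) ++ Fw m

/-- The infinite Fibonacci word (0-indexed): the fixed point of σ beginning with `a`. -/
def fibWord (i : ℕ) : Bool := (Fw (i + 1)).getD i false

/-- `fFactor i n = F[i;n]`, the factor of length `n` of the Fibonacci word
beginning at (1-indexed) position `i`. -/
def fFactor (i n : ℕ) : List Bool := (List.range n).map fun t => fibWord (i - 1 + t)

/-- `w` occurs as a factor of the infinite Fibonacci word. -/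
def IsFactorF (w : List Bool) : Prop := ∃ i : ℕ, 1 ≤ i ∧ w = fFactor i w.length

/-- `D2 i n`: the number of distinct squares occurring as factors of `F[i;n]`. -/
noncomputable def D2 (i n : ℕ) : ℕ :=
  {w : List Bool | w ≠ [] ∧ (w ++ w) <:+: fFactor i n}.ncard

lemma Fw_length : ∀ m, (Fw m).length = fn m
  | 0 => rfl
  | 1 => rfl
  | m + 2 => by
    simp only [Fw, List.length_append, Fw_length (m+1), Fw_length m, fn]
    have := @Nat.fib_add_two (m + 2)
    have h3 : Nat.fib (m + 2 + 1) = Nat.fib (m + 1 + 2) := rfl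
    omega

lemma fn_pos (m : ℕ) : 0 < fn m := Nat.fib_pos.2 (by omega)

lemma fn_succ (m : ℕ) : fn (m + 1) = fn m + Nat.fib (m + 1) := by
  simp only [fn]
  have := @Nat.fib_add_two (m + 1)
  have h3 : Nat.fib (m + 1 + 1) = Nat.fib (m + 2) := rfl
  omega

lemma le_fn (m : ℕ) : m ≤ fn m := by
  induction m with
  | zero => exact Nat.le_of_lt (fn_pos 0)
  | succ n ih =>
    have h2 : 0 < Nat.fib (n + 1) := Nat.fib_pos.2 (by omega)
    have := fn_succ n
    omega

lemma Fw_prefix (m : ℕ) : Fw m <+: Fw (m + 1) := by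
  cases m with
  | zero => exact ⟨[true], rfl⟩
  | succ k => exact ⟨Fw k, rfl⟩

lemma Fw_prefix_le {k l : ℕ} (h : k ≤ l) : Fw k <+: Fw l := by
  induction l with
  | zero => simp_all
  | succ n ih =>
    rcases Nat.eq_or_lt_of_le h with rfl | h'
    · exact List.prefix_refl _
    · exact (ih (by omega)).trans (Fw_prefix n)

lemma getD_prefix {l₁ l₂ : List Bool} (h : l₁ <+: l₂) {n : ℕ} (hn : n < l₁.length) :
    l₂.getD n false = l₁.getD n false := by
  obtain ⟨t, rfl⟩ := h
  exact List.getD_append _ _ _ _ hn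

lemma fibWord_eq (k n : ℕ) (h : n < fn k) : fibWord n = (Fw k).getD n false := by
  have h1 : n < (Fw (n+1)).length := by
    rw [Fw_length]; exact lt_of_lt_of_le (Nat.lt_succ_self n) (le_fn (n+1))
  have h2 : n < (Fw k).length := by rw [Fw_length]; exact h
  rcases le_total (n+1) k with hk | hk
  · exact (getD_prefix (Fw_prefix_le hk) h1).symm
  · exact getD_prefix (Fw_prefix_le hk) h2

lemma fn_add_two (m : ℕ) : fn (m + 2) = fn (m + 1) + fn m := by
  simp only [fn]
  have := @Nat.fib_add_two (m + 2)
  have h3 : Nat.fib (m + 2 + 1) = Nat.fib (m + 1 + 2) := rfl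
  omega

lemma swap (m : ℕ) : ∃ (C : List Bool) (x y : Bool),
    Fw (m + 1) ++ Fw m = C ++ [x, y] ∧ Fw m ++ Fw (m + 1) = C ++ [y, x] := by
  induction m with
  | zero => exact ⟨[false], true, false, rfl, rfl⟩
  | succ k ih =>
    obtain ⟨C, x, y, h1, h2⟩ := ih
    refine ⟨Fw (k + 1) ++ C, y, x, ?_, ?_⟩
    · show (Fw (k + 1) ++ Fw k) ++ Fw (k + 1) = _
      rw [List.append_assoc, h2, List.append_assoc]
    · show Fw (k + 1) ++ (Fw (k + 1) ++ Fw k) = _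
      rw [h1, List.append_assoc]

lemma shift (m n : ℕ) (h : n + 2 < fn (m + 1)) : fibWord (n + fn m) = fibWord n := by
  obtain ⟨C, x, y, h1, h2⟩ := swap m
  have hC : C.length = fn (m + 2) - 2 := by
    have := congrArg List.length h1
    simp only [List.length_append, Fw_length, List.length_cons, List.length_nil] at this
    have h2' := fn_add_two m
    omega
  have hfn2 := fn_add_two m
  have hlt : n + fn m < C.length := by omega
  have e1 : fibWord (n + fn m) = (Fw (m + 2)).getD (n + fn m) false :=
    fibWord_eq (m + 2) _ (by omega)
  rw [e1, show Fw (m + 2) = Fw (m + 1) ++ Fw m from rfl, h1,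
    List.getD_append _ _ _ _ (by omega : n + fn m < C.length)]
  have e2 : C.getD (n + fn m) false = (C ++ [y, x]).getD (n + fn m) false :=
    (List.getD_append _ _ _ _ hlt).symm
  rw [e2, ← h2, List.getD_append_right _ _ _ _ (by rw [Fw_length]; omega),
    Fw_length, Nat.add_sub_cancel]
  exact (fibWord_eq (m + 1) n (by omega)).symm

lemma fFactor_length (i n : ℕ) : (fFactor i n).length = n := by
  simp [fFactor]

lemma fFactor_append (i a b : ℕ) (hi : 1 ≤ i) :
    fFactor i (a + b) = fFactor i a ++ fFactor (i + a) b := by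
  simp only [fFactor, List.range_add, List.map_append, List.map_map]
  congr 1
  apply List.map_congr_left
  intro t _
  simp only [Function.comp_apply]
  congr 1
  omega

lemma square (m i : ℕ) (hi : 1 ≤ i) (him : i < Nat.fib (m + 1)) :
    fFactor i (fn m) = fFactor (i + fn m) (fn m) := by
  simp only [fFactor]
  apply List.map_congr_left
  intro t ht
  rw [List.mem_range] at ht
  have hfs := fn_succ m
  have h1 : i + fn m - 1 + t = (i - 1 + t) + fn m := by omega
  rw [h1, shift m (i - 1 + t) (by omega)]

lemma fn_strictMono : StrictMono fn := by
  apply strictMono_nat_of_lt_succ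
  intro n
  have := fn_succ n
  have := Nat.fib_pos.2 (show 0 < n + 1 by omega)
  omega

/-- For every position `i` of the Fibonacci word there is `m₀` such that `F[i;2f_m]`
is a square for all `m ≥ m₀`; in particular every position starts infinitely many
distinct squares. -/
theorem every_position_starts_infinitely_many_squares (i : ℕ) (hi : 1 ≤ i) :
    (∃ m₀, ∀ m, m₀ ≤ m → fFactor i (fn m) = fFactor (i + fn m) (fn m)) ∧
    {w : List Bool | w ≠ [] ∧ fFactor i (2 * w.length) = w ++ w}.Infinite := by
  have key : ∀ m, i + 2 ≤ m → fFactor i (fn m) = fFactor (i + fn m) (fn m) := by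
    intro m hm
    apply square m i hi
    cases m with
    | zero => omega
    | succ k =>
      have := le_fn k
      exact lt_of_lt_of_le (by omega) this
  refine ⟨⟨i + 2, key⟩, ?_⟩
  apply Set.infinite_of_injective_forall_mem (f := fun k : ℕ => fFactor i (fn (i + 2 + k)))
  case hi =>
    intro a b hab
    have := congrArg List.length hab
    simp only [fFactor_length] at this
    have := fn_strictMono.injective this
    omega
  case hf =>
    intro a
    refine ⟨?_, ?_⟩
    · have h := fFactor_length i (fn (i + 2 + a))
      have := fn_pos (i + 2 + a)
      intro hne
      rw [hne] at h
      simp at h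
      omega
    · rw [fFactor_length, two_mul, fFactor_append i _ _ hi, key _ (by omega)]
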